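/- Let L be a diffusion generator with constant positive-semidefinite diffusion matrix D, and let C be a linear (first-order differential) operator. For Φ(f) = |Cf|²/f, the generalized Γ operator satisfies the pointwise lower bound Γ_Φ(f) ≥ (Cf·[L,C]f)/f for any positive smooth f. -/

import Mathlib

/-!
Write `g = Cf`. Applying the product rule `L(uv) = u Lv + v Lu + Γ₁(u,v) + Γ₁(v,u)` to the
identity `f · (g²/f) = g · g` (once for `L`, once for the gradient) yields
`L(g²/f) = 2g Lg/f − g² Lf/f² + (2/f) wᵀDw` with `w = ∇g − (g/f)∇f`.
The terms `C(Lf)` cancel from the two sides of the inequality, and what remains is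
`Γ_Φ(f) − (Cf·[L,C]f)/f = wᵀDw/f ≥ 0`.
-/

open scoped RealInnerProductSpace

noncomputable section

/-- Diffusion generator `Lf = b·∇f + ∇·(D∇f)` with constant diffusion matrix `D`. -/
def Lgen (n : ℕ) (b : EuclideanSpace ℝ (Fin n) → EuclideanSpace ℝ (Fin n))
    (Dm : Matrix (Fin n) (Fin n) ℝ) (f : EuclideanSpace ℝ (Fin n) → ℝ)
    (x : EuclideanSpace ℝ (Fin n)) : ℝ :=
  ⟪b x, gradient f x⟫ + ∑ i : Fin n, ∑ j : Fin n,
    Dm i j * iteratedFDeriv ℝ 2 f x ![EuclideanSpace.single i 1, EuclideanSpace.single j 1]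

section SecondDerivative

variable {E : Type*} [NormedAddCommGroup E] [NormedSpace ℝ E] {u v : E → ℝ}

lemma ContDiff.hasFDerivAt_fderiv (hu : ContDiff ℝ 2 u) (x : E) :
    HasFDerivAt (fderiv ℝ u) (fderiv ℝ (fderiv ℝ u) x) x :=
  ((hu.fderiv_right (m := 1) le_rfl).differentiable one_ne_zero x).hasFDerivAt

lemma fderiv_fderiv_mul_apply (hu : ContDiff ℝ 2 u) (hv : ContDiff ℝ 2 v) (x y z : E) :
    fderiv ℝ (fderiv ℝ (u * v)) x y z =
      u x * fderiv ℝ (fderiv ℝ v) x y z + v x * fderiv ℝ (fderiv ℝ u) x y z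
        + fderiv ℝ u x y * fderiv ℝ v x z + fderiv ℝ v x y * fderiv ℝ u x z := by
  have hu' := hu.differentiable two_ne_zero
  have hv' := hv.differentiable two_ne_zero
  have hd : fderiv ℝ (u * v) = fun y => u y • fderiv ℝ v y + v y • fderiv ℝ u y :=
    funext fun y => fderiv_mul (hu' y) (hv' y)
  rw [hd, HasFDerivAt.fderiv (f := fun y => u y • fderiv ℝ v y + v y • fderiv ℝ u y)
    (((hu' x).hasFDerivAt.smul (hv.hasFDerivAt_fderiv x)).add
      ((hv' x).hasFDerivAt.smul (hu.hasFDerivAt_fderiv x)))]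
  simp only [add_apply, smul_apply, ContinuousLinearMap.smulRight_apply, smul_eq_mul]
  ring

end SecondDerivative

open scoped Matrix

section Generator

variable {n : ℕ} (b : EuclideanSpace ℝ (Fin n) → EuclideanSpace ℝ (Fin n))
  (Dm : Matrix (Fin n) (Fin n) ℝ)

def partialDerivs (u : EuclideanSpace ℝ (Fin n) → ℝ) (x : EuclideanSpace ℝ (Fin n)) :
    Fin n → ℝ :=
  fun i => fderiv ℝ u x (EuclideanSpace.single i 1)

lemma partialDerivs_mul {u v : EuclideanSpace ℝ (Fin n) → ℝ} {x : EuclideanSpace ℝ (Fin n)}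
    (hu : DifferentiableAt ℝ u x) (hv : DifferentiableAt ℝ v x) :
    partialDerivs (u * v) x = u x • partialDerivs v x + v x • partialDerivs u x := by
  ext i
  simp only [partialDerivs, fderiv_mul hu hv, add_apply, smul_apply, smul_eq_mul, Pi.add_apply,
    Pi.smul_apply]

lemma Lgen_eq_fderiv (u : EuclideanSpace ℝ (Fin n) → ℝ) (x : EuclideanSpace ℝ (Fin n)) :
    Lgen n b Dm u x = fderiv ℝ u x (b x) + ∑ i : Fin n, ∑ j : Fin n,
      Dm i j *
        fderiv ℝ (fderiv ℝ u) x (EuclideanSpace.single i 1) (EuclideanSpace.single j 1) := by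
  unfold Lgen gradient
  congr 1
  · rw [real_inner_comm]
    exact InnerProductSpace.toDual_symm_apply
  · refine Finset.sum_congr rfl fun i _ => Finset.sum_congr rfl fun j _ => ?_
    rw [iteratedFDeriv_two_apply]
    simp only [Fin.isValue, Matrix.cons_val_zero, Matrix.cons_val_one,
      Matrix.cons_val_fin_one]

lemma Lgen_mul {u v : EuclideanSpace ℝ (Fin n) → ℝ} (hu : ContDiff ℝ 2 u)
    (hv : ContDiff ℝ 2 v) (x : EuclideanSpace ℝ (Fin n)) :
    Lgen n b Dm (u * v) x = u x * Lgen n b Dm v x + v x * Lgen n b Dm u x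
      + partialDerivs u x ⬝ᵥ Dm *ᵥ partialDerivs v x
      + partialDerivs v x ⬝ᵥ Dm *ᵥ partialDerivs u x := by
  have hsecond : ∀ i j,
      Dm i j *
          fderiv ℝ (fderiv ℝ (u * v)) x (EuclideanSpace.single i 1) (EuclideanSpace.single j 1)
        = u x * (Dm i j *
            fderiv ℝ (fderiv ℝ v) x (EuclideanSpace.single i 1) (EuclideanSpace.single j 1))
          + v x * (Dm i j *
            fderiv ℝ (fderiv ℝ u) x (EuclideanSpace.single i 1) (EuclideanSpace.single j 1))
          + partialDerivs u x i * (Dm i j * partialDerivs v x j)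
          + partialDerivs v x i * (Dm i j * partialDerivs u x j) := by
    intro i j
    rw [fderiv_fderiv_mul_apply hu hv]
    simp only [partialDerivs]
    ring
  simp only [Lgen_eq_fderiv, hsecond, Finset.sum_add_distrib, ← Finset.mul_sum, dotProduct,
    Matrix.mulVec, fderiv_mul (hu.differentiable two_ne_zero x) (hv.differentiable two_ne_zero x)]
  simp only [add_apply, smul_apply, smul_eq_mul]
  ring

lemma Lgen_sq_div {f g : EuclideanSpace ℝ (Fin n) → ℝ} (hf : ContDiff ℝ 2 f)
    (hg : ContDiff ℝ 2 g) (hf0 : ∀ y, f y ≠ 0) (x : EuclideanSpace ℝ (Fin n)) :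
    Lgen n b Dm (fun y => g y ^ 2 / f y) x =
      2 * g x * Lgen n b Dm g x / f x - g x ^ 2 * Lgen n b Dm f x / f x ^ 2
        + 2 * ((partialDerivs g x - (g x / f x) • partialDerivs f x) ⬝ᵥ
            Dm *ᵥ (partialDerivs g x - (g x / f x) • partialDerivs f x)) / f x := by
  set u := fun y => g y ^ 2 / f y
  have hu : ContDiff ℝ 2 u := (hg.pow 2).div hf hf0
  have hfu : f * u = g * g := funext fun y => by simp only [Pi.mul_apply, u]; field_simp [hf0 y]
  have hL := Lgen_mul b Dm hf hu x
  rw [hfu, Lgen_mul b Dm hg hg x] at hL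
  have hdu := partialDerivs_mul (hf.differentiable two_ne_zero x) (hu.differentiable two_ne_zero x)
  rw [hfu, partialDerivs_mul (hg.differentiable two_ne_zero x) (hg.differentiable two_ne_zero x)]
    at hdu
  have hpu : partialDerivs u x =
      (f x)⁻¹ • ((2 * g x) • partialDerivs g x - u x • partialDerivs f x) := by
    rw [eq_inv_smul_iff₀ (hf0 x), two_mul, add_smul, hdu]
    abel
  rw [hpu] at hL
  simp only [Matrix.mulVec_sub, Matrix.mulVec_smul, dotProduct_sub, sub_dotProduct,
    smul_dotProduct, dotProduct_smul, smul_eq_mul, u] at hL ⊢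
  have hfx := hf0 x
  field_simp at hL ⊢
  linear_combination -hL

end Generator

/-- For `Φ(f) = |Cf|²/f` with `C` a linear (first-order differential) operator, the
generalized Γ operator `Γ_Φ(f) = (1/2)(LΦ(f) − dΦ(f)·Lf)`, with Gateaux derivative
`dΦ(f)·g = 2(Cf·Cg)/f − |Cf|² g/f²`, satisfies the pointwise lower bound
`Γ_Φ(f) ≥ (Cf·[L,C]f)/f` for positive smooth `f`. -/
theorem gammaPhi_square_lower_bound
    (n : ℕ) (b : EuclideanSpace ℝ (Fin n) → EuclideanSpace ℝ (Fin n))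
    (Dm : Matrix (Fin n) (Fin n) ℝ) (hD : Dm.PosSemidef)
    (C : (EuclideanSpace ℝ (Fin n) → ℝ) →ₗ[ℝ] (EuclideanSpace ℝ (Fin n) → ℝ))
    (f : EuclideanSpace ℝ (Fin n) → ℝ) (hfpos : ∀ x, 0 < f x)
    (hf : ContDiff ℝ 2 f) (hCf : ContDiff ℝ 2 (C f)) :
    ∀ x,
      (1 / 2) * (Lgen n b Dm (fun y => (C f y) ^ 2 / f y) x
          - (2 * (C f x * C (Lgen n b Dm f) x) / f x
              - (C f x) ^ 2 * Lgen n b Dm f x / (f x) ^ 2))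
      ≥ C f x * (Lgen n b Dm (C f) x - C (Lgen n b Dm f) x) / f x := by
  intro x
  rw [Lgen_sq_div b Dm hf hCf (fun y => (hfpos y).ne') x]
  set w := partialDerivs (C f) x - (C f x / f x) • partialDerivs f x
  have hw : 0 ≤ w ⬝ᵥ Dm *ᵥ w / f x :=
    div_nonneg (by simpa only [star_trivial] using hD.dotProduct_mulVec_nonneg w) (hfpos x).le
  exact sub_nonneg.1 (hw.trans_eq (by ring))
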